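/- arXiv:1805.04304 — 4 statements merged into one kernel-verified Lean document; each statement's English description precedes it below -/
import Mathlib

section
/- Let $\tau > 0$, $d \geq 0$, $p \geq 0$, and $c_a \in \{0,1\}$, and let $t_p = k_p c_p/\tau$, $t_v = k_v c_v/\tau$, $t_a = k_a c_a/\tau$ with $c_p = c_v = 1$. All roots of $\lambda^3 + \lambda^2(1/\tau + t_a(d+p)) + \lambda t_v (d+p) + t_p (d+p)$ have strictly negative real parts if and only if $d + p > 0$, $k_p > 0$, $k_a c_a > -1/(d+p)$, and $k_v > \tau k_p / (1 + k_a c_a (d+p))$. -/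
/-- A real monic cubic has a real root. -/
lemma cubic_real_root (a b c : ℝ) : ∃ r : ℝ, r ^ 3 + a * r ^ 2 + b * r + c = 0 := by
  set f : ℝ → ℝ := fun x => x ^ 3 + a * x ^ 2 + b * x + c with hf
  have hcont : Continuous f := by continuity
  set M : ℝ := 1 + |a| + |b| + |c| with hM
  have hM1 : (1 : ℝ) ≤ M := by
    have := abs_nonneg a; have := abs_nonneg b; have := abs_nonneg c; linarith
  have hM0 : 0 < M := by linarith
  have ha : a ≤ |a| := le_abs_self a
  have ha' : -|a| ≤ a := neg_abs_le a
  have hb : b ≤ |b| := le_abs_self b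
  have hb' : -|b| ≤ b := neg_abs_le b
  have hc : c ≤ |c| := le_abs_self c
  have hc' : -|c| ≤ c := neg_abs_le c
  have hMsq : M ≤ M ^ 2 := by nlinarith
  have hfM : 0 ≤ f M := by
    have h1 : (|a| + |b| + |c|) * M ^ 2 ≤ (M - 1) * M ^ 2 := by nlinarith
    have h2 : -(a * M ^ 2 + b * M + c) ≤ (|a| + |b| + |c|) * M ^ 2 := by nlinarith
    simp only [hf]
    nlinarith
  have hfm : f (-M) ≤ 0 := by
    have h2 : a * M ^ 2 - b * M + c ≤ (|a| + |b| + |c|) * M ^ 2 := by nlinarith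
    have h1 : (|a| + |b| + |c|) * M ^ 2 ≤ (M - 1) * M ^ 2 := by nlinarith
    simp only [hf]
    nlinarith
  have hle : (-M : ℝ) ≤ M := by linarith
  have := intermediate_value_Icc hle hcont.continuousOn
  have hmem : (0 : ℝ) ∈ Set.Icc (f (-M)) (f M) := ⟨hfm, hfM⟩
  obtain ⟨r, _, hr⟩ := this hmem
  exact ⟨r, hr⟩

/-- Stability of a real monic quadratic. -/
lemma quad_stable (β γ : ℝ) :
    (∀ z : ℂ, z ^ 2 + (β : ℂ) * z + (γ : ℂ) = 0 → z.re < 0) ↔ (0 < β ∧ 0 < γ) := by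
  constructor
  · intro h
    by_contra hcon
    rw [not_and_or, not_lt, not_lt] at hcon
    -- exhibit a root with nonnegative real part
    have key : ∃ z : ℂ, z ^ 2 + (β : ℂ) * z + (γ : ℂ) = 0 ∧ 0 ≤ z.re := by
      rcases hcon with hβ | hγ
      · by_cases hdisc : 0 ≤ β ^ 2 - 4 * γ
        · -- real root (-β + √disc)/2
          set s := Real.sqrt (β ^ 2 - 4 * γ) with hs
          have hs2 : s ^ 2 = β ^ 2 - 4 * γ := Real.sq_sqrt hdisc
          have hs0 : 0 ≤ s := Real.sqrt_nonneg _
          refine ⟨(((-β + s) / 2 : ℝ) : ℂ), ?_, ?_⟩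
          · push_cast
            have hsc : ((s : ℂ)) ^ 2 = (β : ℂ) ^ 2 - 4 * (γ : ℂ) := by
              have := Complex.ofReal_inj.mpr hs2
              push_cast at this
              exact this
            linear_combination hsc / 4
          · simp only [Complex.ofReal_re]
            nlinarith
        · -- complex root with real part -β/2
          push_neg at hdisc
          set t := Real.sqrt (4 * γ - β ^ 2) with ht
          have ht2 : t ^ 2 = 4 * γ - β ^ 2 := Real.sq_sqrt (by linarith)
          refine ⟨⟨-β / 2, t / 2⟩, ?_, ?_⟩
          · apply Complex.ext <;> simp [pow_two, Complex.mul_re, Complex.mul_im] <;> nlinarith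
          · simp; linarith
      · -- γ ≤ 0 : real root (-β + √disc)/2 ≥ 0
        have hdisc : 0 ≤ β ^ 2 - 4 * γ := by nlinarith
        set s := Real.sqrt (β ^ 2 - 4 * γ) with hs
        have hs2 : s ^ 2 = β ^ 2 - 4 * γ := Real.sq_sqrt hdisc
        have hs0 : 0 ≤ s := Real.sqrt_nonneg _
        have hsβ : β ≤ s := by nlinarith [le_abs_self β, abs_nonneg β, sq_abs β]
        refine ⟨(((-β + s) / 2 : ℝ) : ℂ), ?_, ?_⟩
        · push_cast
          have : ((s : ℂ)) ^ 2 = (β : ℂ) ^ 2 - 4 * (γ : ℂ) := by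
            have := Complex.ofReal_inj.mpr hs2
            push_cast at this
            exact this
          linear_combination this / 4
        · simp only [Complex.ofReal_re]
          linarith
    obtain ⟨z, hz, hre⟩ := key
    have := h z hz
    linarith
  · rintro ⟨hβ, hγ⟩ z hz
    set x := z.re with hx
    set y := z.im with hy
    have h1 : x ^ 2 - y ^ 2 + β * x + γ = 0 := by
      have := congrArg Complex.re hz
      simpa [pow_two, Complex.mul_re, Complex.mul_im] using this
    have h2 : y * (2 * x + β) = 0 := by
      have := congrArg Complex.im hz
      simp [pow_two, Complex.mul_re, Complex.mul_im] at this
      linarith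
    by_contra hxn
    push_neg at hxn
    rcases mul_eq_zero.mp h2 with hy0 | hxβ
    · rw [hy0] at h1; nlinarith
    · nlinarith

/-- Routh–Hurwitz criterion for a real monic cubic. -/
lemma routh_cubic (a b c : ℝ) :
    (∀ z : ℂ, z ^ 3 + (a : ℂ) * z ^ 2 + (b : ℂ) * z + (c : ℂ) = 0 → z.re < 0) ↔
      (0 < a ∧ 0 < c ∧ c < a * b) := by
  obtain ⟨r, hr⟩ := cubic_real_root a b c
  have hfac : ∀ z : ℂ, z ^ 3 + (a : ℂ) * z ^ 2 + (b : ℂ) * z + (c : ℂ) =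
      (z - (r : ℂ)) * (z ^ 2 + ((a + r : ℝ) : ℂ) * z + ((b + a * r + r ^ 2 : ℝ) : ℂ)) := by
    intro z
    have hc : ((r ^ 3 + a * r ^ 2 + b * r + c : ℝ) : ℂ) = 0 := by
      rw [hr]; norm_num
    push_cast at hc ⊢
    linear_combination hc
  have key : (∀ z : ℂ, z ^ 3 + (a : ℂ) * z ^ 2 + (b : ℂ) * z + (c : ℂ) = 0 → z.re < 0) ↔
      (r < 0 ∧ ∀ z : ℂ, z ^ 2 + ((a + r : ℝ) : ℂ) * z + ((b + a * r + r ^ 2 : ℝ) : ℂ) = 0 → z.re < 0) := by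
    constructor
    · intro h
      constructor
      · have := h (r : ℂ) (by rw [hfac]; ring)
        simpa using this
      · intro z hz
        apply h z
        rw [hfac, hz, mul_zero]
    · rintro ⟨hr0, hq⟩ z hz
      rw [hfac] at hz
      rcases mul_eq_zero.mp hz with h | h
      · have : z = (r : ℂ) := by linear_combination h
        rw [this]; simpa using hr0
      · exact hq z h
  rw [key, quad_stable]
  constructor
  · rintro ⟨hr0, hβ, hγ⟩
    refine ⟨by linarith, ?_, ?_⟩
    · have hcval : c = -r * (b + a * r + r ^ 2) := by linear_combination hr
      rw [hcval]
      exact mul_pos (by linarith) hγ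
    · have habc : a * b - c = (a + r) * (b + r ^ 2) := by linear_combination -hr
      have ha : 0 < a := by linarith
      have hbr2 : 0 < b + r ^ 2 := by nlinarith [mul_pos ha (neg_pos.mpr hr0)]
      nlinarith [mul_pos hβ hbr2]
  · rintro ⟨ha, hc, hab⟩
    have hcval : c = -r * (b + a * r + r ^ 2) := by linear_combination hr
    have habc : a * b - c = (a + r) * (b + r ^ 2) := by linear_combination -hr
    have hrne : r < 0 := by
      rcases lt_trichotomy r 0 with h | h | h
      · exact h
      · exfalso; rw [h] at hcval; simp at hcval; linarith
      · exfalso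
        have hγneg : b + a * r + r ^ 2 < 0 := by
          by_contra hcon
          push_neg at hcon
          nlinarith [mul_nonneg h.le hcon]
        have hbr2 : b + r ^ 2 < 0 := by nlinarith [mul_pos ha h]
        nlinarith [mul_pos (show 0 < a + r by linarith) (show 0 < -(b + r ^ 2) by linarith)]
    have hγ : 0 < b + a * r + r ^ 2 := by
      by_contra hcon
      push_neg at hcon
      nlinarith [mul_nonpos_of_nonneg_of_nonpos (show (0:ℝ) ≤ -r by linarith) hcon]
    have hbr2 : 0 < b + r ^ 2 := by nlinarith [mul_pos ha (neg_pos.mpr hrne)]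
    have hβ : 0 < a + r := by
      by_contra hcon
      push_neg at hcon
      nlinarith [mul_nonneg (neg_nonneg.mpr hcon) hbr2.le]
    exact ⟨hrne, hβ, hγ⟩

theorem stmt_10 (τ d p cp cv ca kp kv ka tp tv ta : ℝ)
    (hτ : 0 < τ) (hd : 0 ≤ d) (hp : 0 ≤ p)
    (hca : ca = 0 ∨ ca = 1) (hcp : cp = 1) (hcv : cv = 1)
    (htp : tp = kp * cp / τ) (htv : tv = kv * cv / τ) (hta : ta = ka * ca / τ) :
    (∀ z : ℂ, z ^ 3 + ((1 / τ + ta * (d + p) : ℝ) : ℂ) * z ^ 2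
        + ((tv * (d + p) : ℝ) : ℂ) * z + ((tp * (d + p) : ℝ) : ℂ) = 0 → z.re < 0) ↔
      (0 < d + p ∧ 0 < kp ∧ ka * ca > -1 / (d + p) ∧
        kv > τ * kp / (1 + ka * ca * (d + p))) := by
  subst hcp hcv htp htv hta
  rw [routh_cubic]
  set s := d + p with hs
  have hs0 : 0 ≤ s := by positivity
  set K := ka * ca with hK
  clear_value s K
  have hτ' : τ ≠ 0 := ne_of_gt hτ
  have hτ2 : (0:ℝ) < τ ^ 2 := by positivity
  have ea : 1 / τ + K / τ * s = (1 + K * s) / τ := by field_simp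
  have ec : kp * 1 / τ * s = kp * s / τ := by ring
  have eab : (1 / τ + K / τ * s) * (kv * 1 / τ * s) - kp * 1 / τ * s
      = ((1 + K * s) * (kv * s) - kp * s * τ) / τ ^ 2 := by
    field_simp
  constructor
  · rintro ⟨ha, hc, hab⟩
    rw [ea] at ha
    rw [ec] at hc
    have haK : 0 < 1 + K * s := by
      have := mul_pos ha hτ
      have heq : (1 + K * s) / τ * τ = 1 + K * s := by field_simp
      linarith
    have hkps : 0 < kp * s := by
      have := mul_pos hc hτ
      have heq : kp * s / τ * τ = kp * s := by field_simp
      linarith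
    have hspos : 0 < s := by
      rcases lt_or_eq_of_le hs0 with h | h
      · exact h
      · exfalso; rw [← h] at hkps; simp at hkps
    have hkp : 0 < kp := by
      by_contra h
      push_neg at h
      nlinarith
    have h1 : kp * s * τ < (1 + K * s) * (kv * s) := by
      have hd0 : 0 < (1 + K * s) * (kv * s) - kp * s * τ := by
        have h2 : 0 < ((1 + K * s) * (kv * s) - kp * s * τ) / τ ^ 2 := by
          rw [← eab]; linarith
        have heq : ((1 + K * s) * (kv * s) - kp * s * τ) / τ ^ 2 * τ ^ 2
            = (1 + K * s) * (kv * s) - kp * s * τ := by field_simp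
        nlinarith [mul_pos h2 hτ2, heq]
      linarith
    refine ⟨hspos, hkp, ?_, ?_⟩
    · rw [gt_iff_lt, div_lt_iff₀ hspos]
      linarith
    · rw [gt_iff_lt, div_lt_iff₀ haK]
      by_contra hcon
      push_neg at hcon
      nlinarith [mul_le_mul_of_nonneg_right hcon hspos.le]
  · rintro ⟨hspos, hkp, hK1, hkv⟩
    have haK : 0 < 1 + K * s := by
      rw [gt_iff_lt, div_lt_iff₀ hspos] at hK1
      linarith
    have hkvτ : τ * kp < kv * (1 + K * s) := by
      rw [gt_iff_lt, div_lt_iff₀ haK] at hkv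
      linarith
    refine ⟨?_, ?_, ?_⟩
    · rw [ea]; positivity
    · rw [ec]; positivity
    · have h1 : 0 < (1 + K * s) * (kv * s) - kp * s * τ := by nlinarith
      have h2 : 0 < ((1 + K * s) * (kv * s) - kp * s * τ) / τ ^ 2 := by positivity
      rw [← eab] at h2
      linarith
end

section
/- Let $\tau > 0$ and $k_p, k_v > 0$ with $k_v > \tau k_p$. Then all roots of the cubic $\lambda^3 + \lambda^2/\tau + \lambda\, g k_v/\tau + g k_p/\tau$ have strictly negative real parts for every $g > 0$. -/
theorem stmt_11 (τ kp kv : ℝ) (hτ : 0 < τ) (hkp : 0 < kp) (hkv : 0 < kv)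
    (h : kv > τ * kp) :
    ∀ g : ℝ, 0 < g →
      ∀ z : ℂ, z ^ 3 + z ^ 2 / (τ : ℂ) + z * ((g * kv / τ : ℝ) : ℂ)
        + ((g * kp / τ : ℝ) : ℂ) = 0 → z.re < 0 := by
  intro g hg z hz
  by_contra hx
  push_neg at hx
  have hτ0 : (τ : ℂ) ≠ 0 := by exact_mod_cast hτ.ne'
  have heq : (τ : ℂ) * z ^ 3 + z ^ 2 + (g * kv : ℝ) * z + (g * kp : ℝ) = 0 := by
    have h2 := congrArg (fun w => (τ : ℂ) * w) hz
    simp only [mul_zero] at h2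
    rw [← h2]
    push_cast
    field_simp
  set x := z.re with hxdef
  set y := z.im with hydef
  have hre := congrArg Complex.re heq
  have him := congrArg Complex.im heq
  simp only [Complex.add_re, Complex.add_im, Complex.mul_re, Complex.mul_im,
    Complex.ofReal_re, Complex.ofReal_im, pow_succ, pow_zero, one_mul,
    Complex.one_re, Complex.one_im, Complex.zero_re, Complex.zero_im] at hre him
  rw [← hxdef, ← hydef] at hre him
  -- hre : τ(x³-3xy²) + x²-y² + gkv x + gkp = 0 (expanded form)
  -- him : τ(3x²y-y³) + 2xy + gkv y = 0
  by_cases hy : y = 0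
  · rw [hy] at hre
    nlinarith [mul_pos hg hkp, mul_pos hg hkv, mul_nonneg (mul_nonneg hτ.le hx) (mul_nonneg hx hx),
      mul_nonneg hx hx, mul_nonneg (mul_pos hg hkv).le hx]
  · have hy2 : τ * y ^ 2 = 3 * τ * x ^ 2 + 2 * x + g * kv := by
      have h3 : y * (τ * (3 * x ^ 2 - y ^ 2) + 2 * x + g * kv) = 0 := by nlinarith [him]
      have h4 := (mul_eq_zero.mp h3).resolve_left hy
      nlinarith [h4]
    have key : 8*τ^2*x^3 + 8*τ*x^2 + 2*τ*(g*kv)*x + 2*x + (g*kv - τ*(g*kp)) = 0 := by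
      linear_combination (-τ) * hre - (3*τ*x + 1) * hy2
    nlinarith [key, mul_pos hg (sub_pos.mpr h),
      mul_nonneg (mul_nonneg (mul_nonneg hτ.le hτ.le) hx) (mul_nonneg hx hx),
      mul_nonneg (mul_nonneg hτ.le hx) hx,
      mul_nonneg (mul_nonneg hτ.le (mul_pos hg hkv).le) hx, hx]
end

section
/- Let $A \in \mathbb{R}^{n\times n}$, $B \in \mathbb{R}^{n\times 1}$, $\varepsilon > 0$, and suppose $P \succ 0$ (symmetric positive definite) satisfies the algebraic Riccati equation $PA + A^T P - P B B^T P + \varepsilon I_n = 0$. Let $g > 0$, $\alpha \geq 1/(2g)$, $k^T = \alpha B^T P$, and $\tilde{A} = A - g B k^T$. Then $P \tilde{A} + \tilde{A}^T P = -\tilde{Q}$ where $\tilde{Q} = (2\alpha g - 1) P B B^T P + \varepsilon I_n \succeq \varepsilon I_n \succ 0$; consequently $\tilde{A}$ is Hurwitz (all eigenvalues have negative real part). -/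
/-!
The Riccati equation turns the closed-loop matrix `A - g B (α Bᵀ P)` into a solution of the
Lyapunov equation with `Q̃ = (2αg - 1) P B Bᵀ P + ε I`, which is positive definite since
`2αg ≥ 1`. Lyapunov's argument then applies to a complex eigenpair `(μ, v)`: pairing the
equation with `v` gives `2 Re μ · v*Pv = -v*Q̃v`, and both quadratic forms are positive.
-/

open Matrix
open scoped ComplexOrder

namespace Matrix

theorem lyapunov_eq_of_riccati_feedback {R ι κ : Type*} [CommRing R] [Fintype ι] [Fintype κ]
    {A P Q : Matrix ι ι R} {B : Matrix ι κ R} (hP : Pᵀ = P)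
    (hARE : P * A + Aᵀ * P - P * B * Bᵀ * P + Q = 0) (g α : R) :
    P * (A - g • (B * (α • (Bᵀ * P)))) + (A - g • (B * (α • (Bᵀ * P))))ᵀ * P
      = -((2 * α * g - 1) • (P * B * Bᵀ * P) + Q) := by
  rw [← sub_eq_zero, ← hARE]
  simp only [transpose_sub, transpose_smul, transpose_mul, transpose_transpose, hP,
    mul_sub, sub_mul, Matrix.smul_mul, Matrix.mul_smul, Matrix.mul_assoc]
  module

variable {ι : Type*} [Fintype ι]

theorem re_lt_zero_of_mem_spectrum_of_lyapunov [DecidableEq ι] {𝕜 : Type*} [RCLike 𝕜]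
    {A P Q : Matrix ι ι 𝕜} (hP : P.PosDef) (hQ : Q.PosDef) (hlyap : P * A + Aᴴ * P = -Q)
    {μ : 𝕜} (hμ : μ ∈ spectrum 𝕜 A) : RCLike.re μ < 0 := by
  rw [← spectrum_toLin', ← Module.End.hasEigenvalue_iff_mem_spectrum] at hμ
  obtain ⟨v, hv⟩ := hμ.exists_hasEigenvector
  have hAv : A *ᵥ v = μ • v := by simpa using hv.apply_eq_smul
  have hquad : (μ + star μ) * (star v ⬝ᵥ P *ᵥ v) = -(star v ⬝ᵥ Q *ᵥ v) := by
    have h := congrArg (fun M => star v ⬝ᵥ M *ᵥ v) hlyap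
    simp only [add_mulVec, ← mulVec_mulVec, dotProduct_add, neg_mulVec, dotProduct_neg] at h
    rw [dotProduct_mulVec (star v) Aᴴ, ← star_mulVec, hAv] at h
    rw [← h, star_smul, mulVec_smul, dotProduct_smul, smul_dotProduct, smul_eq_mul, smul_eq_mul]
    ring
  have hq := (RCLike.pos_iff.mp (hP.dotProduct_mulVec_pos hv.2)).1
  have hr := (RCLike.pos_iff.mp (hQ.dotProduct_mulVec_pos hv.2)).1
  have hre := congrArg RCLike.re hquad
  rw [RCLike.star_def, RCLike.add_conj, ← RCLike.ofReal_ofNat, ← RCLike.ofReal_mul,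
    RCLike.re_ofReal_mul, map_neg] at hre
  nlinarith

theorem re_star_dotProduct_map_ofReal_mulVec (M : Matrix ι ι ℝ) (v : ι → ℂ) :
    (star v ⬝ᵥ M.map Complex.ofReal *ᵥ v).re
      = (fun i => (v i).re) ⬝ᵥ M *ᵥ (fun i => (v i).re)
        + (fun i => (v i).im) ⬝ᵥ M *ᵥ (fun i => (v i).im) := by
  simp only [dotProduct, mulVec, map_apply, Pi.star_apply, Finset.mul_sum,
    ← Finset.sum_add_distrib, Complex.re_sum]
  refine Finset.sum_congr rfl fun i _ => Finset.sum_congr rfl fun j _ => ?_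
  simp only [Complex.mul_re, Complex.mul_im, Complex.ofReal_re, Complex.ofReal_im,
    Complex.star_def, Complex.conj_re, Complex.conj_im]
  ring

theorem PosDef.map_ofReal {P : Matrix ι ι ℝ} (hP : P.PosDef) :
    (P.map Complex.ofReal).PosDef := by
  have hherm : (P.map Complex.ofReal).IsHermitian :=
    hP.isHermitian.map _ fun r => (Complex.conj_ofReal r).symm
  refine .of_dotProduct_mulVec_pos hherm fun v hv => Complex.pos_iff.mpr ⟨?_, ?_⟩
  · have hre_or_im : (fun i => (v i).re) ≠ 0 ∨ (fun i => (v i).im) ≠ 0 := by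
      contrapose! hv
      exact funext fun i => Complex.ext (congrFun hv.1 i) (congrFun hv.2 i)
    have hnonneg (x : ι → ℝ) : 0 ≤ x ⬝ᵥ P *ᵥ x := by
      simpa using hP.posSemidef.dotProduct_mulVec_nonneg x
    have hpos {x : ι → ℝ} (hx : x ≠ 0) : 0 < x ⬝ᵥ P *ᵥ x := by
      simpa using hP.dotProduct_mulVec_pos hx
    rw [re_star_dotProduct_map_ofReal_mulVec]
    rcases hre_or_im with h | h
    · exact add_pos_of_pos_of_nonneg (hpos h) (hnonneg _)
    · exact add_pos_of_nonneg_of_pos (hnonneg _) (hpos h)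
  · exact (hherm.im_star_dotProduct_mulVec_self v).symm

theorem re_lt_zero_of_mem_spectrum_map_ofReal_of_lyapunov [DecidableEq ι]
    {A P Q : Matrix ι ι ℝ} (hP : P.PosDef) (hQ : Q.PosDef) (hlyap : P * A + Aᵀ * P = -Q)
    {μ : ℂ} (hμ : μ ∈ spectrum ℂ (A.map Complex.ofReal)) : μ.re < 0 := by
  refine re_lt_zero_of_mem_spectrum_of_lyapunov hP.map_ofReal hQ.map_ofReal ?_ hμ
  have h := congrArg Complex.ofRealHom.mapMatrix hlyap
  simp only [map_add, map_mul, map_neg, RingHom.mapMatrix_apply] at h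
  rwa [← conjTranspose_map _ fun r => (Complex.conj_ofReal r).symm,
    conjTranspose_eq_transpose_of_trivial]

end Matrix

theorem stmt_12 (n : ℕ) (A : Matrix (Fin n) (Fin n) ℝ) (B : Matrix (Fin n) (Fin 1) ℝ)
    (ε : ℝ) (hε : 0 < ε) (P : Matrix (Fin n) (Fin n) ℝ) (hP : P.PosDef)
    (hARE : P * A + Aᵀ * P - P * B * Bᵀ * P + ε • (1 : Matrix (Fin n) (Fin n) ℝ) = 0)
    (g α : ℝ) (hg : 0 < g) (hα : 1 / (2 * g) ≤ α)
    (kT : Matrix (Fin 1) (Fin n) ℝ) (hk : kT = α • (Bᵀ * P))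
    (Atil : Matrix (Fin n) (Fin n) ℝ) (hAtil : Atil = A - g • (B * kT))
    (Qtil : Matrix (Fin n) (Fin n) ℝ)
    (hQtil : Qtil = (2 * α * g - 1) • (P * B * Bᵀ * P) + ε • (1 : Matrix (Fin n) (Fin n) ℝ)) :
    P * Atil + Atilᵀ * P = -Qtil ∧
    ((2 * α * g - 1) • (P * B * Bᵀ * P)).PosSemidef ∧ Qtil.PosDef ∧
    (∀ μ ∈ spectrum ℂ (Atil.map Complex.ofReal), μ.re < 0) := by
  subst hk hAtil hQtil
  have hPsymm : Pᵀ = P := by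
    simpa only [conjTranspose_eq_transpose_of_trivial] using hP.isHermitian.eq
  have hlyap := lyapunov_eq_of_riccati_feedback hPsymm hARE g α
  have hcoef : 0 ≤ 2 * α * g - 1 := by
    have := (div_le_iff₀ (by positivity)).mp hα
    linarith
  have hPBBP : (P * B * Bᵀ * P).PosSemidef := by
    simpa only [conjTranspose_eq_transpose_of_trivial, hPsymm, Matrix.mul_assoc] using
      (posSemidef_self_mul_conjTranspose B).mul_mul_conjTranspose_same P
  have hQpos := (PosDef.one.smul hε).posSemidef_add (hPBBP.smul hcoef)
  exact ⟨hlyap, hPBBP.smul hcoef, hQpos,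
    fun μ hμ => re_lt_zero_of_mem_spectrum_map_ofReal_of_lyapunov hP hQpos hlyap hμ⟩
end

section
/- Let $G = \mathcal{D} - \mathcal{A} + \mathcal{P}$ where $\mathcal{A}$ is the adjacency matrix of a directed acyclic graph on $N$ vertices, $\mathcal{D}$ its in-degree diagonal matrix, and $\mathcal{P}$ a diagonal $\{0,1\}$ pinning matrix. Then $G$ is invertible if and only if $d_{ii} + p_{ii} > 0$ for all $i$, i.e., every node has positive in-degree or is pinned to the leader. -/
open Matrix

theorem stmt_15 (N : ℕ) (E : Fin N → Fin N → Prop) [DecidableRel E]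
    (hirr : ∀ v, ¬ E v v)
    (hacyc : ¬ ∃ v, Relation.TransGen E v v)
    (𝒜 : Matrix (Fin N) (Fin N) ℝ)
    (h𝒜 : ∀ i j, 𝒜 i j = if E j i then (1 : ℝ) else 0)
    (d p : Fin N → ℝ)
    (hd : ∀ i, d i = ∑ j, 𝒜 i j)
    (hp : ∀ i, p i = 0 ∨ p i = 1)
    (G : Matrix (Fin N) (Fin N) ℝ)
    (hG : G = Matrix.diagonal d - 𝒜 + Matrix.diagonal p) :
    IsUnit G ↔ ∀ i, 0 < d i + p i := by
  classical
  -- extend the acyclic relation to a linear order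
  set r : Fin N → Fin N → Prop := fun a b => a = b ∨ Relation.TransGen E a b with hr
  haveI : IsPartialOrder (Fin N) r :=
    { refl := fun a => Or.inl rfl
      trans := by
        rintro a b c (rfl | hab) (rfl | hbc)
        · exact Or.inl rfl
        · exact Or.inr hbc
        · exact Or.inr hab
        · exact Or.inr (hab.trans hbc)
      antisymm := by
        rintro a b (rfl | hab) (h | hba)
        · rfl
        · rfl
        · exact h.symm
        · exact absurd ⟨a, hab.trans hba⟩ hacyc }
  obtain ⟨s, hslin, hrs⟩ := extend_partialOrder r
  haveI := hslin
  -- a topological ordering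
  set f : Fin N → ℕ := fun a => (Finset.univ.filter (fun x => s x a)).card with hf
  have hmono : ∀ a b, s a b → a ≠ b → f a < f b := by
    intro a b hab hne
    apply Finset.card_lt_card
    constructor
    · intro x hx
      simp only [Finset.mem_filter, Finset.mem_univ, true_and] at hx ⊢
      exact Trans.trans hx hab
    · intro hsub
      have hb : b ∈ Finset.univ.filter (fun x => s x b) := by
        simp only [Finset.mem_filter, Finset.mem_univ, true_and]
        exact refl_of s b
      have := hsub hb
      simp only [Finset.mem_filter, Finset.mem_univ, true_and] at this
      exact hne (antisymm this hab).symm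
  have hinj : Function.Injective f := by
    intro a b hab
    by_contra hne
    rcases hslin.total a b with h | h
    · exact absurd hab (Nat.ne_of_lt (hmono a b h hne))
    · exact absurd hab.symm (Nat.ne_of_lt (hmono b a h (Ne.symm hne)))
  have hE : ∀ a b, E a b → f a < f b := by
    intro a b hab
    have hne : a ≠ b := fun h => hirr a (h ▸ hab)
    exact hmono a b (hrs a b (Or.inr (Relation.TransGen.single hab))) hne
  -- G takes the form: off-diagonal entries nonzero only along edges
  have hGoff : ∀ i j, i ≠ j → ¬ E j i → G i j = 0 := by
    intro i j hne hEji
    simp [hG, Matrix.diagonal_apply_ne _ hne, h𝒜, hEji]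
  have hGdiag : ∀ i, G i i = d i + p i := by
    intro i
    simp [hG, h𝒜, hirr i]
  -- Gᵀ is block triangular with respect to f
  have hBT : Gᵀ.BlockTriangular f := by
    intro i j hij
    show G j i = 0
    have hne : j ≠ i := by
      intro h; subst h; exact lt_irrefl _ hij
    apply hGoff j i hne
    intro hE'
    exact absurd hij (not_lt_of_gt (hE i j hE'))
  -- determinant computation
  have hblock : ∀ i : Fin N, (Gᵀ.toSquareBlock f (f i)).det = G i i := by
    intro i
    haveI : Unique {a // f a = f i} :=
      ⟨⟨⟨i, rfl⟩⟩, fun a => Subtype.ext (hinj a.2)⟩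
    rw [Matrix.det_unique]
    have hdef : (default : {a // f a = f i}) = ⟨i, rfl⟩ := Subsingleton.elim _ _
    simp [Matrix.toSquareBlock_def, hdef]
  have hdet : G.det = ∏ i, (d i + p i) := by
    rw [← Matrix.det_transpose, hBT.det]
    rw [Finset.prod_image (fun a _ b _ h => hinj h)]
    exact Finset.prod_congr rfl fun i _ => (hblock i).trans (hGdiag i)
  have hdnn : ∀ i, 0 ≤ d i := by
    intro i
    rw [hd i]
    apply Finset.sum_nonneg
    intro j _
    rw [h𝒜]
    positivity
  have hpnn : ∀ i, 0 ≤ p i := fun i => by rcases hp i with h | h <;> simp [h]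
  rw [Matrix.isUnit_iff_isUnit_det, isUnit_iff_ne_zero, hdet, Finset.prod_ne_zero_iff]
  constructor
  · intro h i
    exact lt_of_le_of_ne (add_nonneg (hdnn i) (hpnn i)) (Ne.symm (h i (Finset.mem_univ i)))
  · intro h i _
    exact ne_of_gt (h i)
end
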